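/- arXiv:2307.02629 — 6 statements merged into one kernel-verified Lean document; each statement's English description precedes it below -/
import Mathlib

section
/- Let S ∈ Σ^n be a string and let R^S ∈ Σ^{n×n} be the matrix each of whose rows equals S. If Γ is a one-dimensional string attractor for S of size k, then Γ' = {(1, j) : j ∈ Γ} is a 2D attractor for R^S of size k. -/
/-- A 2D attractor for the `n×n` matrix `M`: a set of positions such that every
square submatrix of `M` has an occurrence crossing a position of the set. -/
def IsAttractor {A : Type*} (n : ℕ) (M : ℕ → ℕ → A) (Γ : Set (ℕ × ℕ)) : Prop :=
  (∀ p ∈ Γ, p.1 < n ∧ p.2 < n) ∧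
  ∀ k r c : ℕ, 1 ≤ k → r + k ≤ n → c + k ≤ n →
    ∃ r' c' : ℕ, r' + k ≤ n ∧ c' + k ≤ n ∧
      (∀ a b : ℕ, a < k → b < k → M (r' + a) (c' + b) = M (r + a) (c + b)) ∧
      ∃ p ∈ Γ, r' ≤ p.1 ∧ p.1 < r' + k ∧ c' ≤ p.2 ∧ p.2 < c' + k

/-- `γ₂D(M)`: minimum size of a 2D attractor for the `n×n` matrix `M`. -/
noncomputable def gamma2D {A : Type*} (n : ℕ) (M : ℕ → ℕ → A) : ℕ :=
  sInf {m | ∃ Γ : Finset (ℕ × ℕ), IsAttractor n M ↑Γ ∧ Γ.card = m}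

/-- A (1D) string attractor for the length-`n` string `S`. -/
def IsStrAttractor {A : Type*} (n : ℕ) (S : ℕ → A) (Γ : Set ℕ) : Prop :=
  (∀ p ∈ Γ, p < n) ∧
  ∀ k j : ℕ, 1 ≤ k → j + k ≤ n →
    ∃ j' : ℕ, j' + k ≤ n ∧ (∀ i : ℕ, i < k → S (j' + i) = S (j + i)) ∧
      ∃ p ∈ Γ, j' ≤ p ∧ p < j' + k

/-- `d_{k×k}(M)`: number of distinct `k×k` contiguous square submatrices of the
`n×n` matrix `M`. -/
noncomputable def dkk {A : Type*} (n : ℕ) (M : ℕ → ℕ → A) (k : ℕ) : ℕ :=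
  Set.ncard {f : Fin k → Fin k → A |
    ∃ r c : ℕ, r + k ≤ n ∧ c + k ≤ n ∧ ∀ a b : Fin k, f a b = M (r + (a : ℕ)) (c + (b : ℕ))}

/-- `δ₂D(M) = max_{1 ≤ k ≤ n} d_{k×k}(M)/k²`. -/
noncomputable def delta2D {A : Type*} (n : ℕ) (M : ℕ → ℕ → A) : ℚ≥0 :=
  (Finset.Icc 1 n).sup fun k => (dkk n M k : ℚ≥0) / (k : ℚ≥0) ^ 2

/-- `R^S`: the square matrix all of whose rows equal the string `S`. -/
def RS {A : Type*} (S : ℕ → A) : ℕ → ℕ → A := fun _ j => S j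

/-- If `Γ` is a string attractor for `S` of size `k`, then `{(1,j) : j ∈ Γ}`
(first row, here row `0`) is a 2D attractor of size `k` for `R^S`. -/
theorem stmt3 {A : Type*} (n : ℕ) (S : ℕ → A) (Γ : Finset ℕ) (k : ℕ)
    (h : IsStrAttractor n S ↑Γ) (hcard : Γ.card = k) :
    IsAttractor n (RS S) ↑(Γ.image fun j => ((0 : ℕ), j)) ∧
    (Γ.image fun j => ((0 : ℕ), j)).card = k := by
  obtain ⟨hb, hocc⟩ := h
  refine ⟨⟨?_, ?_⟩, ?_⟩
  · rintro ⟨a, b⟩ hp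
    simp only [Finset.coe_image, Set.mem_image, Finset.mem_coe, Prod.mk.injEq] at hp
    obtain ⟨j, hj, rfl, rfl⟩ := hp
    have hn : 0 < n := lt_of_le_of_lt (Nat.zero_le j) (hb j hj)
    exact ⟨hn, hb j hj⟩
  · intro m r c hm hr hc
    obtain ⟨j', hj', heq, p, hp, hp1, hp2⟩ := hocc m c hm hc
    refine ⟨0, j', by omega, hj', ?_, (0, p), ?_, by omega, by omega, hp1, hp2⟩
    · intro a b ha hbm
      simp only [RS]
      exact heq b hbm
    · simp only [Finset.coe_image, Set.mem_image, Finset.mem_coe]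
      exact ⟨p, hp, rfl⟩
  · rw [← hcard]
    exact Finset.card_image_of_injective _ (fun a b hab => (Prod.mk.injEq _ _ _ _).mp hab |>.2)
end

section
/- Let S ∈ Σ^n and let R^S be the n×n matrix each of whose rows equals S. If Γ' is a 2D attractor for R^S, then the projection Γ = {j : (i,j) ∈ Γ' for some i} is a string attractor for S. -/
/-- If `Γ'` is a 2D attractor for `R^S`, its projection on column indices is a
string attractor for `S`. -/
theorem stmt4 {A : Type*} (n : ℕ) (S : ℕ → A) (Γ' : Set (ℕ × ℕ))
    (h : IsAttractor n (RS S) Γ') :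
    IsStrAttractor n S {j | ∃ i : ℕ, (i, j) ∈ Γ'} := by
  constructor
  · rintro p ⟨i, hi⟩
    exact (h.1 _ hi).2
  · intro k j hk hjk
    obtain ⟨r', c', hr', hc', heq, p, hp, hr1, hr2, hc1, hc2⟩ := h.2 k j j hk hjk hjk
    refine ⟨c', hc', fun i hi => heq 0 i hk hi, p.2, ⟨p.1, hp⟩, hc1, hc2⟩
end

section
/- For every square matrix M ∈ Σ^{n×n}, δ_2D(M) ≤ γ_2D(M). -/
lemma dkk_le_aux {A : Type*} (n : ℕ) (M : ℕ → ℕ → A) (k : ℕ) (hk : 1 ≤ k)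
    (Γ : Finset (ℕ × ℕ)) (hΓ : IsAttractor n M ↑Γ) :
    dkk n M k ≤ Γ.card * k ^ 2 := by
  classical
  obtain ⟨hbound, hatt⟩ := hΓ
  set S := {f : Fin k → Fin k → A |
    ∃ r c : ℕ, r + k ≤ n ∧ c + k ≤ n ∧ ∀ a b : Fin k, f a b = M (r + (a : ℕ)) (c + (b : ℕ))} with hSdef
  have hchoice : ∀ f : S, ∃ t : Γ × Fin k × Fin k,
      ∀ x y : Fin k, (f : Fin k → Fin k → A) x y
        = M ((t.1 : ℕ × ℕ).1 - (t.2.1 : ℕ) + x) ((t.1 : ℕ × ℕ).2 - (t.2.2 : ℕ) + y) := by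
    rintro ⟨f, r, c, hr, hc, hf⟩
    obtain ⟨r', c', hr', hc', heq, p, hp, h1, h2, h3, h4⟩ := hatt k r c hk hr hc
    refine ⟨⟨⟨p, hp⟩, ⟨p.1 - r', by omega⟩, ⟨p.2 - c', by omega⟩⟩, ?_⟩
    intro x y
    simp only
    have e1 : p.1 - (p.1 - r') = r' := by omega
    have e2 : p.2 - (p.2 - c') = c' := by omega
    rw [e1, e2, hf x y]
    exact (heq x y x.2 y.2).symm
  choose φ hφ using hchoice
  have hinj : Function.Injective φ := by
    intro f g hfg
    apply Subtype.ext
    funext x y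
    have h1 := hφ f x y
    have h2 := hφ g x y
    rw [hfg] at h1
    rw [h1, h2]
  have hcard : Nat.card S ≤ Nat.card (Γ × Fin k × Fin k) :=
    Nat.card_le_card_of_injective φ hinj
  have : Nat.card (Γ × Fin k × Fin k) = Γ.card * k ^ 2 := by
    simp [Nat.card_prod, Nat.card_eq_fintype_card, sq]
  rw [this] at hcard
  rw [dkk, ← Nat.card_coe_set_eq]
  exact hcard

/-- `δ₂D(M) ≤ γ₂D(M)` for every square matrix `M`. -/
theorem stmt11 {A : Type*} (n : ℕ) (M : ℕ → ℕ → A) :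
    delta2D n M ≤ (gamma2D n M : ℚ≥0) := by
  have hne : {m | ∃ Γ : Finset (ℕ × ℕ), IsAttractor n M ↑Γ ∧ Γ.card = m}.Nonempty := by
    refine ⟨((Finset.range n) ×ˢ (Finset.range n)).card,
      (Finset.range n) ×ˢ (Finset.range n), ⟨?_, ?_⟩, rfl⟩
    · intro p hp
      simpa [Finset.mem_product] using hp
    · intro k r c hk hr hc
      exact ⟨r, c, hr, hc, fun a b _ _ => rfl, (r, c),
        by simp [Finset.mem_product]; omega, by omega, by omega, by omega, by omega⟩
  obtain ⟨Γ, hΓ, hcard⟩ := Nat.sInf_mem hne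
  rw [delta2D]
  apply Finset.sup_le
  intro k hk
  rw [Finset.mem_Icc] at hk
  have hkpos : (0 : ℚ≥0) < (k : ℚ≥0) ^ 2 := by
    have : (0:ℚ≥0) < (k : ℚ≥0) := by exact_mod_cast hk.1
    positivity
  rw [div_le_iff₀ hkpos]
  have h := dkk_le_aux n M k hk.1 Γ hΓ
  rw [hcard] at h
  exact_mod_cast h
end

section
/- Let n be a perfect square and let S be the string of length n obtained by concatenating the blocks S_1, ..., S_{√n/2}, where S_i = 1^i 0^{2√n − i}. Then each block S_i, as a substring of S of length 2√n starting at position (i−1)·2√n + 1, has exactly one occurrence in S. -/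
/-- The string `S ∈ {0,1}^{m²}` made of `m/2` consecutive blocks of length
`2m`, the `q`-th block (0-indexed) being `1^{q+1} 0^{2m-(q+1)}`. -/
def Sblocks (m p : ℕ) : Fin 2 := if p % (2 * m) < p / (2 * m) + 1 then 1 else 0

/-- With `n = (2t)²` a perfect square and `√n = 2t`, each block
`S_i = 1^i 0^{2√n−i}` (`1 ≤ i ≤ t = √n/2`) occurs exactly once in `S`:
its only occurrence is at its defining position `(i−1)·2√n` (0-indexed). -/
theorem stmt15 (t i : ℕ) (ht : 1 ≤ t) (hi1 : 1 ≤ i) (hi2 : i ≤ t) (p : ℕ)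
    (hp : p + 2 * (2 * t) ≤ (2 * t) ^ 2)
    (hocc : ∀ x : ℕ, x < 2 * (2 * t) →
      Sblocks (2 * t) (p + x) = Sblocks (2 * t) ((i - 1) * (2 * (2 * t)) + x)) :
    p = (i - 1) * (2 * (2 * t)) := by
  have hm : 0 < 2 * (2 * t) := by omega
  have sval : ∀ a b : ℕ, b < 2 * (2 * t) →
      Sblocks (2 * t) (a * (2 * (2 * t)) + b) = if b < a + 1 then 1 else 0 := by
    intro a b hb
    unfold Sblocks
    rw [mul_comm a, Nat.mul_add_mod, Nat.mod_eq_of_lt hb, Nat.mul_add_div hm,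
      Nat.div_eq_of_lt hb, Nat.add_zero]
  set L := 2 * (2 * t) with hLdef
  have hocc' : ∀ x : ℕ, x < L → Sblocks (2 * t) (p + x) = if x < i then 1 else 0 := by
    intro x hx
    rw [hocc x hx, sval _ _ hx]
    congr 1
    simp only [eq_iff_iff]
    omega
  set q := p / L with hq
  set r := p % L with hr
  have hpl : p = q * L + r := by
    rw [hq, hr, mul_comm]; exact (Nat.div_add_mod p L).symm
  have hrL : r < L := Nat.mod_lt _ hm
  have hqt : q + 1 ≤ t := by
    have hLt : (2 * t) ^ 2 = t * L := by rw [hLdef]; ring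
    rw [hLt] at hp
    have h1 : p < L * t := by
      calc p < p + L := by omega
        _ ≤ t * L := hp
        _ = L * t := mul_comm _ _
    have := Nat.div_lt_of_lt_mul h1
    omega
  by_cases hr0 : r = 0
  · -- aligned case
    have key1 : Sblocks (2 * t) (p + (i - 1)) = if (i - 1) < q + 1 then 1 else 0 := by
      have : p + (i - 1) = q * L + (i - 1) := by omega
      rw [this, sval q (i - 1) (by omega)]
    have key2 : Sblocks (2 * t) (p + i) = if i < q + 1 then 1 else 0 := by
      have : p + i = q * L + i := by omega
      rw [this, sval q i (by omega)]
    rw [hocc' (i - 1) (by omega)] at key1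
    rw [hocc' i (by omega)] at key2
    have h1 : i - 1 < q + 1 := by
      by_contra h
      simp [h, show i - 1 < i by omega] at key1
    have h2 : ¬ i < q + 1 := by
      by_contra h
      simp [h, show ¬ i < i by omega] at key2
    have : q = i - 1 := by omega
    rw [hpl, this, hr0]
    simp
  · -- crossing case: contradiction
    exfalso
    have key1 : Sblocks (2 * t) (p + (L - r)) = 1 := by
      have : p + (L - r) = (q + 1) * L + 0 := by
        rw [hpl]; ring_nf; omega
      rw [this, sval (q + 1) 0 (by omega)]
      simp
    rw [hocc' (L - r) (by omega)] at key1
    have hLri : L - r < i := by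
      by_contra h
      simp [h] at key1
    -- so r > L - i ≥ 3t, but then S p = 0 while block starts with 1
    have key2 : Sblocks (2 * t) (p + 0) = if r < q + 1 then 1 else 0 := by
      have : p + 0 = q * L + r := by omega
      rw [this, sval q r hrL]
    rw [hocc' 0 (by omega)] at key2
    have : ¬ r < q + 1 := by omega
    simp [this, show 0 < i by omega] at key2
end

section
/- There exists a family of n×n matrices M (over a 3-letter alphabet) with δ_2D(M) = O(1) and γ_2D(M) = Ω(√n). Concretely, let M have first row S = S_1 S_2 ... S_{√n/2} with S_i = 1^i 0^{2√n−i} and all other rows equal to #^n; then δ_2D(M) is bounded by an absolute constant while every 2D attractor for M has size at least √n/2. -/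
/-- The matrix over the 3-letter alphabet `{0,1,#=2}` whose first row is
`S = S_1 ⋯ S_{m/2}` with `S_i = 1^i 0^{2m−i}` and all other rows `#^n`. -/
def Mmat (m i j : ℕ) : Fin 3 :=
  if i = 0 then (if j % (2 * m) < j / (2 * m) + 1 then 1 else 0) else 2

section Aux

lemma ite_eq_one' (P : Prop) [Decidable P] : (if P then (1:Fin 3) else 0) = 1 ↔ P := by
  split <;> simp_all

lemma divmod' (d q r : ℕ) (hd : 0 < d) (hr : r < d) :
    (d*q + r) % d = r ∧ (d*q + r) / d = q := by
  constructor
  · rw [Nat.mul_add_mod, Nat.mod_eq_of_lt hr]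
  · rw [Nat.mul_add_div hd, Nat.div_eq_of_lt hr]; omega

lemma S_one_iff (m bb s x : ℕ) (hm : 0 < m) (hx : s + x < 4*m) :
    Mmat m 0 (2*m*bb + s + x) = 1 ↔ (s + x ≤ bb ∨ (2*m ≤ s + x ∧ s + x ≤ 2*m + bb + 1)) := by
  unfold Mmat
  have h2m : 0 < 2*m := by omega
  rw [if_pos rfl]
  rcases lt_or_ge (s+x) (2*m) with h | h
  · have e0 : 2*m*bb + s + x = 2*m*bb + (s + x) := by omega
    obtain ⟨e1, e2⟩ := divmod' (2*m) bb (s+x) h2m h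
    rw [e0, e1, e2, ite_eq_one']
    omega
  · have e0 : 2*m*bb + s + x = 2*m*(bb+1) + (s + x - 2*m) := by
      rw [Nat.mul_add, Nat.mul_one]; omega
    obtain ⟨e1, e2⟩ := divmod' (2*m) (bb+1) (s+x-2*m) h2m (by omega)
    rw [e0, e1, e2, ite_eq_one']
    omega

lemma Mmat_pos_row (m i j : ℕ) (hi : i ≠ 0) : Mmat m i j = 2 := by
  unfold Mmat; rw [if_neg hi]

lemma row0_cases (m j : ℕ) : Mmat m 0 j = 1 ∨ Mmat m 0 j = 0 := by
  unfold Mmat; rw [if_pos rfl]; split <;> simp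

lemma eq_ite_of_iff (v : Fin 3) (hv : v = 1 ∨ v = 0) (P : Prop) [Decidable P]
    (h : v = 1 ↔ P) : (if P then (1:Fin 3) else 0) = v := by
  rcases hv with hv | hv <;> subst hv <;> split <;> simp_all

lemma exists_pt (t m n : ℕ) (ht : 1 ≤ t) (hm : m = 2*t) (hn : n = 2*m*t)
    (Γ : Finset (ℕ×ℕ)) (hΓ : IsAttractor n (Mmat m) ↑Γ) (i : ℕ) (hi : i < t) :
    ∃ p ∈ Γ, 2*m*i ≤ p.2 ∧ p.2 < 2*m*i + 2*m := by
  have hmpos : 0 < m := by omega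
  have mono : ∀ x y : ℕ, x ≤ y → 2*m*x ≤ 2*m*y := fun x y h => Nat.mul_le_mul_left _ h
  have mono' : ∀ x y : ℕ, 2*m*x < 2*m*y → x < y := fun x y h => Nat.lt_of_mul_lt_mul_left h
  have hbig : 2*m*1 ≤ 2*m*t := mono 1 t ht
  have hci : 2*m*(i+1) ≤ 2*m*t := mono (i+1) t hi
  have hexp : ∀ x : ℕ, 2*m*(x+1) = 2*m*x + 2*m := fun x => by ring
  obtain ⟨r', c', h1, h2, hmatch, p, hp, hpr1, hpr2, hpc1, hpc2⟩ :=
    hΓ.2 (2*m) 0 (2*m*i) (by omega) (by rw [hn]; have := hexp i; omega)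
      (by rw [hn]; have := hexp i; omega)
  have hRHS : ∀ b : ℕ, b < 2*m → (Mmat m 0 (2*m*i + b) = 1 ↔ b ≤ i) := by
    intro b hb
    have h := S_one_iff m i 0 b hmpos (by omega)
    have e : 2*m*i + 0 + b = 2*m*i + b := by omega
    rw [e] at h
    rw [h]
    omega
  have hr0 : r' = 0 := by
    by_contra hr
    have heq := hmatch 0 0 (by omega) (by omega)
    rw [Mmat_pos_row m (r'+0) (c'+0) (by omega)] at heq
    have h10 : Mmat m (0+0) (2*m*i+0) = 1 := by
      simp only [Nat.zero_add]
      exact (hRHS 0 (by omega)).2 (by omega)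
    rw [h10] at heq
    exact absurd heq (by decide)
  subst hr0
  obtain ⟨s, bb, hslt, hc'⟩ : ∃ s bb, s < 2*m ∧ c' = 2*m*bb + s :=
    ⟨c' % (2*m), c' / (2*m), Nat.mod_lt _ (by omega), (Nat.div_add_mod c' (2*m)).symm⟩
  have hLHS : ∀ b : ℕ, b < 2*m →
      (Mmat m 0 (c' + b) = 1 ↔ (s + b ≤ bb ∨ (2*m ≤ s + b ∧ s + b ≤ 2*m + bb + 1))) := by
    intro b hb
    have e : c' + b = 2*m*bb + s + b := by omega
    rw [e]
    exact S_one_iff m bb s b hmpos (by omega)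
  have key : ∀ b : ℕ, b < 2*m →
      ((s + b ≤ bb ∨ (2*m ≤ s + b ∧ s + b ≤ 2*m + bb + 1)) ↔ b ≤ i) := by
    intro b hb
    rw [← hLHS b hb, ← hRHS b hb]
    have heq := hmatch 0 b (by omega) hb
    simp only [Nat.zero_add] at heq
    rw [heq]
  have hcn : 2*m*bb + s + 2*m ≤ 2*m*t := by rw [← hc']; omega
  have hsbb : s ≤ bb := by have := key 0 (by omega); omega
  have hs0 : s = 0 := by
    by_contra hsne
    have hbbt : bb + 2 ≤ t := by
      have h1 : 2*m*(bb+1) < 2*m*t := by have := hexp bb; omega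
      have := mono' _ _ h1
      omega
    have := (key (2*m - s) (by omega)).1 (by omega)
    omega
  have hbbi : bb = i := by
    rcases Nat.lt_trichotomy bb i with h | h | h
    · have := (key (bb+1) (by omega)).2 (by omega)
      omega
    · exact h
    · have := (key (i+1) (by omega)).1 (by omega)
      omega
  refine ⟨p, hp, ?_, ?_⟩ <;> · rw [hc', hs0, hbbi] at hpc1 hpc2; omega

lemma lower_bound (t : ℕ) (ht : 1 ≤ t) (Γ : Finset (ℕ×ℕ))
    (hΓ : IsAttractor ((2*t)^2) (Mmat (2*t)) ↑Γ) : t ≤ Γ.card := by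
  have hch : ∀ i : Fin t, ∃ p ∈ Γ, 2*(2*t)*(i:ℕ) ≤ p.2 ∧ p.2 < 2*(2*t)*(i:ℕ) + 2*(2*t) :=
    fun i => exists_pt t (2*t) ((2*t)^2) ht rfl (by ring) Γ hΓ i i.2
  choose f hfΓ hf1 hf2 using hch
  have hcard : (Finset.univ : Finset (Fin t)).card ≤ Γ.card := by
    apply Finset.card_le_card_of_injOn f (fun i _ => hfΓ i)
    intro i _ j _ hij
    have h1 := hf1 i; have h2 := hf2 i
    have h3 := hf1 j; have h4 := hf2 j
    rw [hij] at h1 h2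
    have hvij : (i:ℕ) = (j:ℕ) := by
      by_contra hne
      rcases Nat.lt_or_ge (i:ℕ) (j:ℕ) with h | h
      · have h5 : 2*(2*t)*((i:ℕ)+1) ≤ 2*(2*t)*(j:ℕ) := Nat.mul_le_mul_left _ (by omega)
        have h6 : 2*(2*t)*((i:ℕ)+1) = 2*(2*t)*(i:ℕ) + 2*(2*t) := by ring
        omega
      · have hji : (j:ℕ) < (i:ℕ) := by omega
        have h5 : 2*(2*t)*((j:ℕ)+1) ≤ 2*(2*t)*(i:ℕ) := Nat.mul_le_mul_left _ (by omega)
        have h6 : 2*(2*t)*((j:ℕ)+1) = 2*(2*t)*(j:ℕ) + 2*(2*t) := by ring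
        omega
    exact Fin.ext hvij
  simpa using hcard

lemma ncard_le_of_subset_range {α β : Type*} [Fintype β] (s : Set α) (φ : β → α)
    (h : s ⊆ Set.range φ) : s.ncard ≤ Fintype.card β := by
  calc s.ncard ≤ (Set.range φ).ncard := Set.ncard_le_ncard h (Set.finite_range φ)
    _ = (Set.univ.image φ).ncard := by rw [Set.image_univ]
    _ ≤ (Set.univ : Set β).ncard := Set.ncard_image_le Set.finite_univ
    _ = Fintype.card β := by rw [Set.ncard_univ, Nat.card_eq_fintype_card]

lemma dkk_small (m n k : ℕ) (hm : 0 < m) (hk : 1 ≤ k) (hk2 : k ≤ 2*m) :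
    dkk n (Mmat m) k ≤ 2*(k+1)^2 + 1 := by
  classical
  unfold dkk
  set φ : Option (Bool × Fin (k+1) × Fin (k+1)) → (Fin k → Fin k → Fin 3) := fun o =>
    match o with
    | none => fun _ _ => 2
    | some (flag, p, q) => fun a b =>
        if (a:ℕ) = 0 then
          (if (if flag then ((p:ℕ) ≤ (b:ℕ) ∧ (b:ℕ) < (q:ℕ))
               else ((b:ℕ) < (p:ℕ) ∨ (q:ℕ) ≤ (b:ℕ))) then 1 else 0)
        else 2
    with hφ
  have hsub : {f : Fin k → Fin k → Fin 3 |
      ∃ r c : ℕ, r + k ≤ n ∧ c + k ≤ n ∧ ∀ a b : Fin k, f a b = Mmat m (r + (a:ℕ)) (c + (b:ℕ))}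
      ⊆ Set.range φ := by
    rintro f ⟨r, c, hr, hc, hf⟩
    rcases Nat.eq_zero_or_pos r with hr0 | hrpos
    · subst hr0
      obtain ⟨s, bb, hslt, hc'⟩ : ∃ s bb, s < 2*m ∧ c = 2*m*bb + s :=
        ⟨c % (2*m), c / (2*m), Nat.mod_lt _ (by omega), (Nat.div_add_mod c (2*m)).symm⟩
      have hone : ∀ x : ℕ, x < k → (Mmat m 0 (c + x) = 1 ↔
          (s + x ≤ bb ∨ (2*m ≤ s + x ∧ s + x ≤ 2*m + bb + 1))) := by
        intro x hx
        have e : c + x = 2*m*bb + s + x := by omega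
        rw [e]
        exact S_one_iff m bb s x hm (by omega)
      rcases le_or_gt s bb with hcase | hcase
      · refine ⟨some (false, ⟨min (bb+1-s) k, by omega⟩, ⟨min (2*m-s) k, by omega⟩), ?_⟩
        funext a b
        rw [hφ]
        simp only [Nat.zero_add, hf a b]
        rcases Nat.eq_zero_or_pos (a:ℕ) with ha | ha
        · rw [if_pos ha, ha]
          apply eq_ite_of_iff _ (row0_cases m _)
          rw [hone (b:ℕ) b.2]
          try simp only [if_neg (Bool.false_ne_true)]
          have hb := b.2
          constructor
          · rintro (h1 | ⟨h2, _⟩)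
            · left; omega
            · right; omega
          · rintro (h1 | h1)
            · left; omega
            · right; omega
        · rw [if_neg (by omega)]
          exact (Mmat_pos_row m _ _ (by omega)).symm
      · refine ⟨some (true, ⟨min (2*m-s) k, by omega⟩, ⟨min (2*m+bb+2-s) k, by omega⟩), ?_⟩
        funext a b
        rw [hφ]
        simp only [hf a b, Nat.zero_add]
        rcases Nat.eq_zero_or_pos (a:ℕ) with ha | ha
        · rw [if_pos ha, ha]
          apply eq_ite_of_iff _ (row0_cases m _)
          rw [hone (b:ℕ) b.2]
          try simp only [if_pos rfl]
          have hb := b.2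
          constructor
          · rintro (h1 | ⟨h2, h3⟩)
            · omega
            · constructor <;> omega
          · rintro ⟨h1, h2⟩
            right; constructor <;> omega
        · rw [if_neg (by omega)]
          exact (Mmat_pos_row m _ _ (by omega)).symm
    · refine ⟨none, ?_⟩
      funext a b
      rw [hφ]
      simp only [hf a b]
      exact (Mmat_pos_row m _ _ (by omega)).symm
  calc Set.ncard _ ≤ Fintype.card (Option (Bool × Fin (k+1) × Fin (k+1))) :=
        ncard_le_of_subset_range _ φ hsub
    _ = 2*(k+1)^2 + 1 := by
        simp [Fintype.card_option, Fintype.card_prod, Fintype.card_fin]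
        ring

lemma dkk_large (m n k : ℕ) (hk : 1 ≤ k) :
    dkk n (Mmat m) k ≤ n + 1 := by
  classical
  unfold dkk
  set ψ : Option (Fin n) → (Fin k → Fin k → Fin 3) := fun o =>
    match o with
    | none => fun _ _ => 2
    | some cf => fun a b => if (a:ℕ) = 0 then Mmat m 0 ((cf:ℕ) + (b:ℕ)) else 2
    with hψ
  have hsub : {f : Fin k → Fin k → Fin 3 |
      ∃ r c : ℕ, r + k ≤ n ∧ c + k ≤ n ∧ ∀ a b : Fin k, f a b = Mmat m (r + (a:ℕ)) (c + (b:ℕ))}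
      ⊆ Set.range ψ := by
    rintro f ⟨r, c, hr, hc, hf⟩
    rcases Nat.eq_zero_or_pos r with hr0 | hrpos
    · subst hr0
      refine ⟨some ⟨c, by omega⟩, ?_⟩
      funext a b
      rw [hψ]
      simp only [hf a b, Nat.zero_add]
      rcases Nat.eq_zero_or_pos (a:ℕ) with ha | ha
      · rw [if_pos ha, ha]
      · rw [if_neg (by omega)]
        exact (Mmat_pos_row m _ _ (by omega)).symm
    · refine ⟨none, ?_⟩
      funext a b
      rw [hψ]
      simp only [hf a b]
      exact (Mmat_pos_row m _ _ (by omega)).symm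
  calc Set.ncard _ ≤ Fintype.card (Option (Fin n)) := ncard_le_of_subset_range _ ψ hsub
    _ = n + 1 := by simp

lemma delta_le (t : ℕ) (ht : 1 ≤ t) : delta2D ((2*t)^2) (Mmat (2*t)) ≤ 9 := by
  unfold delta2D
  apply Finset.sup_le
  intro k hk
  simp only [Finset.mem_Icc] at hk
  have hk1 : 1 ≤ k := hk.1
  have hnat : dkk ((2*t)^2) (Mmat (2*t)) k ≤ 9 * k^2 := by
    rcases le_or_gt k (2*(2*t)) with h | h
    · have h1 := dkk_small (2*t) ((2*t)^2) k (by omega) hk1 h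
      nlinarith [h1]
    · have h1 := dkk_large (2*t) ((2*t)^2) k hk1
      have h2 : (2*t)^2 + 1 ≤ 9*k^2 := by nlinarith
      omega
  have hkpos : (0:ℚ≥0) < (k:ℚ≥0)^2 := by
    have : (k:ℚ≥0) ≠ 0 := Nat.cast_ne_zero.mpr (by omega)
    positivity
  rw [div_le_iff₀ hkpos]
  have hcast := (Nat.cast_le (α := ℚ≥0)).mpr hnat
  push_cast at hcast
  exact hcast

end Aux

/-- Family of `n×n` matrices (`n = (2t)²`) with `δ₂D = O(1)` and
`γ₂D ≥ √n/2 = t = Ω(√n)`. -/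
theorem stmt16 :
    ∃ C : ℚ≥0, ∀ t : ℕ, 1 ≤ t →
      delta2D ((2 * t) ^ 2) (Mmat (2 * t)) ≤ C ∧
      ∀ Γ : Finset (ℕ × ℕ),
        IsAttractor ((2 * t) ^ 2) (Mmat (2 * t)) ↑Γ → t ≤ Γ.card := by
  refine ⟨9, fun t ht => ⟨delta_le t ht, fun Γ hΓ => lower_bound t ht Γ hΓ⟩⟩
end

section
/- In the 2D block tree of an n×n matrix M, the number of marked blocks at any level with blocks of size k^ℓ × k^ℓ is O(δ_2D(M) + √(n·δ_2D(M))). Specifically, if u₃ denotes the number of 2k^ℓ×2k^ℓ superblocks not touching the boundary of M, then u₃·k^{2ℓ} ≤ 9·k^{2ℓ}·δ_2D(M), i.e. u₃ ≤ 9·δ_2D(M), and the number u₂ of boundary (non-corner) superblocks satisfies u₂ ≤ min(9·k^ℓ·δ_2D(M), n/k^ℓ) = O(√(n·δ_2D(M))). -/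
/-- `(r,c)` is the first occurrence in row-major order of its `s×s` submatrix
content in the `n×n` matrix `M`. -/
def IsFirstOcc {A : Type*} (n : ℕ) (M : ℕ → ℕ → A) (s r c : ℕ) : Prop :=
  r + s ≤ n ∧ c + s ≤ n ∧ ∀ r' c' : ℕ, r' + s ≤ n → c' + s ≤ n →
    (∀ a b : ℕ, a < s → b < s → M (r' + a) (c' + b) = M (r + a) (c + b)) →
    r < r' ∨ (r = r' ∧ c ≤ c')

/-- The grid-aligned `s×s` blocks of `M` that intersect the first row-major
occurrence of some `s×s` submatrix of `M` (the marked blocks of a 2D block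
tree level with block size `s×s`). -/
def MarkedBlocks {A : Type*} (n : ℕ) (M : ℕ → ℕ → A) (s : ℕ) : Set (ℕ × ℕ) :=
  {q | q.1 * s + s ≤ n ∧ q.2 * s + s ≤ n ∧
    ∃ r c : ℕ, IsFirstOcc n M s r c ∧
      r < q.1 * s + s ∧ q.1 * s < r + s ∧ c < q.2 * s + s ∧ q.2 * s < c + s}

lemma dkkSet_finite {A : Type*} (n : ℕ) (M : ℕ → ℕ → A) (m : ℕ) :
    {f : Fin m → Fin m → A |
      ∃ r c : ℕ, r + m ≤ n ∧ c + m ≤ n ∧ ∀ a b : Fin m, f a b = M (r + (a:ℕ)) (c + (b:ℕ))}.Finite := by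
  have h : {f : Fin m → Fin m → A |
      ∃ r c : ℕ, r + m ≤ n ∧ c + m ≤ n ∧ ∀ a b : Fin m, f a b = M (r + (a:ℕ)) (c + (b:ℕ))} ⊆
      (fun rc : ℕ × ℕ => fun a b : Fin m => M (rc.1 + (a:ℕ)) (rc.2 + (b:ℕ))) ''
        (Set.Iic n ×ˢ Set.Iic n) := by
    rintro f ⟨r, c, hr, hc, hf⟩
    exact ⟨(r, c), ⟨by simpa using le_trans (Nat.le_add_right r m) hr,
      by simpa using le_trans (Nat.le_add_right c m) hc⟩, by
        funext a b; exact (hf a b).symm⟩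
  exact Set.Finite.subset (Set.Finite.image _ ((Set.finite_Iic n).prod (Set.finite_Iic n))) h

lemma dkk_le_delta {A : Type*} (n : ℕ) (M : ℕ → ℕ → A) (m : ℕ) (h1 : 1 ≤ m) (h2 : m ≤ n) :
    (dkk n M m : ℚ≥0) ≤ (m : ℚ≥0) ^ 2 * delta2D n M := by
  have hle : (dkk n M m : ℚ≥0) / (m : ℚ≥0) ^ 2 ≤ delta2D n M :=
    Finset.le_sup (f := fun k => (dkk n M k : ℚ≥0) / (k : ℚ≥0) ^ 2)
      (Finset.mem_Icc.2 ⟨h1, h2⟩)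
  have hm : (0 : ℚ≥0) < (m : ℚ≥0) ^ 2 := by positivity
  calc (dkk n M m : ℚ≥0) = (m:ℚ≥0)^2 * ((dkk n M m : ℚ≥0) / (m : ℚ≥0) ^ 2) := by
        rw [mul_div_cancel₀]; exact hm.ne'
    _ ≤ (m:ℚ≥0)^2 * delta2D n M := by exact mul_le_mul_right hle _

lemma one_le_delta {A : Type*} (n : ℕ) (M : ℕ → ℕ → A) (hn : 1 ≤ n) :
    (1 : ℚ≥0) ≤ delta2D n M := by
  have h1 : 1 ≤ dkk n M 1 := by
    rw [dkk]
    exact (Set.ncard_pos (dkkSet_finite n M 1)).2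
      ⟨fun a b => M ((a:ℕ)) ((b:ℕ)), 0, 0, by omega, by omega, fun a b => by simp⟩
  have := dkk_le_delta n M 1 le_rfl hn
  simpa using this.trans' (by exact_mod_cast h1)
lemma key_count {A : Type*} {n : ℕ} {M : ℕ → ℕ → A} {s : ℕ} (hs : 1 ≤ s)
    (T : Finset (ℕ × ℕ))
    (hT : ∀ p ∈ T, p.1 + 3*s ≤ n ∧ p.2 + 3*s ≤ n ∧
      ∃ r c, IsFirstOcc n M s r c ∧ p.1 ≤ r ∧ r + s ≤ p.1 + 3*s ∧ p.2 ≤ c ∧ c + s ≤ p.2 + 3*s) :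
    T.card ≤ dkk n M (3*s) := by
  classical
  set S : Set (Fin (3*s) → Fin (3*s) → A) := {f | ∃ r c : ℕ, r + 3*s ≤ n ∧ c + 3*s ≤ n ∧
      ∀ a b : Fin (3*s), f a b = M (r + (a:ℕ)) (c + (b:ℕ))} with hS
  have hSfin : S.Finite := dkkSet_finite n M (3*s)
  set F : ℕ × ℕ → (Fin (3*s) → Fin (3*s) → A) :=
    fun p => fun a b => M (p.1 + (a:ℕ)) (p.2 + (b:ℕ)) with hF
  -- asymmetric claim
  have asym : ∀ p ∈ T, ∀ q ∈ T, F p = F q →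
      (p.1 < q.1 ∨ (p.1 = q.1 ∧ p.2 < q.2)) → False := by
    intro p hp q hq hpq hlt
    obtain ⟨hp1, hp2, -⟩ := hT p hp
    obtain ⟨hq1, hq2, r, c, hocc, hqr, hrq, hqc, hcq⟩ := hT q hq
    have hrn := hocc.1
    have hcn := hocc.2.1
    set r₂ := p.1 + (r - q.1) with hr2
    set c₂ := p.2 + (c - q.2) with hc2
    have hr2n : r₂ + s ≤ n := by omega
    have hc2n : c₂ + s ≤ n := by omega
    have hcontents : ∀ a b : ℕ, a < s → b < s → M (r₂ + a) (c₂ + b) = M (r + a) (c + b) := by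
      intro a b ha hb
      have hx : (r - q.1) + a < 3*s := by omega
      have hy : (c - q.2) + b < 3*s := by omega
      have := congrFun (congrFun hpq ⟨(r - q.1) + a, hx⟩) ⟨(c - q.2) + b, hy⟩
      simp only [hF] at this
      have e1 : p.1 + ((r - q.1) + a) = r₂ + a := by omega
      have e2 : p.2 + ((c - q.2) + b) = c₂ + b := by omega
      have e3 : q.1 + ((r - q.1) + a) = r + a := by omega
      have e4 : q.2 + ((c - q.2) + b) = c + b := by omega
      rw [e1, e2, e3, e4] at this
      exact this
    have h3 := hocc.2.2 r₂ c₂ hr2n hc2n hcontents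
    rcases h3 with h | ⟨h, h'⟩ <;> omega
  have hmaps : ∀ p ∈ T, F p ∈ S := by
    intro p hp
    obtain ⟨hp1, hp2, -⟩ := hT p hp
    exact ⟨p.1, p.2, hp1, hp2, fun a b => rfl⟩
  have hinj : Set.InjOn F ↑T := by
    intro p hp q hq hpq
    by_contra hne
    rcases Nat.lt_trichotomy p.1 q.1 with h | h | h
    · exact asym p hp q hq hpq (Or.inl h)
    · rcases Nat.lt_trichotomy p.2 q.2 with h' | h' | h'
      · exact asym p hp q hq hpq (Or.inr ⟨h, h'⟩)
      · exact hne (Prod.ext h h')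
      · exact asym q hq p hp hpq.symm (Or.inr ⟨h.symm, h'⟩)
    · exact asym q hq p hp hpq.symm (Or.inl h)
  calc T.card = (↑T : Set (ℕ × ℕ)).ncard := (Set.ncard_coe_finset T).symm
    _ ≤ S.ncard := Set.ncard_le_ncard_of_injOn F hmaps hinj hSfin
    _ = dkk n M (3*s) := rfl
def SBocc {A : Type*} (n : ℕ) (M : ℕ → ℕ → A) (s : ℕ) (u : ℕ × ℕ) : Prop :=
  ∃ r c, IsFirstOcc n M s r c ∧ u.1 * s ≤ r ∧ r + s ≤ u.1 * s + 2*s ∧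
    u.2 * s ≤ c ∧ c + s ≤ u.2 * s + 2*s

lemma euclid {s a b i j : ℕ} (hi : i < s) (hj : j < s) (h : a*s + i = b*s + j) :
    a = b ∧ i = j := by
  rcases Nat.lt_trichotomy a b with hab | hab | hab
  · have h1 : (a+1)*s ≤ b*s := Nat.mul_le_mul_right s (by omega)
    have h2 : (a+1)*s = a*s + s := by ring
    omega
  · subst hab; omega
  · have h1 : (b+1)*s ≤ a*s := Nat.mul_le_mul_right s (by omega)
    have h2 : (b+1)*s = b*s + s := by ring
    omega

lemma subone_mul {a s : ℕ} (ha : 1 ≤ a) : (a-1)*s + s = a*s := by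
  have h : a - 1 + 1 = a := by omega
  calc (a-1)*s + s = ((a-1)+1)*s := by ring
    _ = a*s := by rw [h]

lemma interior_bound {A : Type*} {n : ℕ} {M : ℕ → ℕ → A} {s L : ℕ} (hs : 1 ≤ s)
    (hLs : L * s = n) (U : Finset (ℕ × ℕ)) (hU : ∀ u ∈ U, SBocc n M s u) :
    (U.filter (fun u => 1 ≤ u.1 ∧ u.1 + 3 ≤ L ∧ 1 ≤ u.2 ∧ u.2 + 3 ≤ L)).card * (s * s)
      ≤ dkk n M (3*s) := by
  classical
  set U' := U.filter (fun u => 1 ≤ u.1 ∧ u.1 + 3 ≤ L ∧ 1 ≤ u.2 ∧ u.2 + 3 ≤ L) with hU'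
  set g : (ℕ×ℕ) × ℕ × ℕ → ℕ × ℕ :=
    fun x => ((x.1.1 - 1)*s + x.2.1, (x.1.2 - 1)*s + x.2.2) with hg
  have hmem : ∀ x ∈ U' ×ˢ (Finset.range s ×ˢ Finset.range s),
      (1 ≤ x.1.1 ∧ x.1.1 + 3 ≤ L ∧ 1 ≤ x.1.2 ∧ x.1.2 + 3 ≤ L) ∧ x.1 ∈ U ∧
        x.2.1 < s ∧ x.2.2 < s := by
    intro x hx
    rw [Finset.mem_product, hU', Finset.mem_filter] at hx
    rw [Finset.mem_product, Finset.mem_range, Finset.mem_range] at hx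
    exact ⟨hx.1.2, hx.1.1, hx.2.1, hx.2.2⟩
  have hinj : Set.InjOn g ↑(U' ×ˢ (Finset.range s ×ˢ Finset.range s)) := by
    intro x hx y hy hxy
    obtain ⟨⟨hx1, -, hx2, -⟩, -, hxi, hxj⟩ := hmem x hx
    obtain ⟨⟨hy1, -, hy2, -⟩, -, hyi, hyj⟩ := hmem y hy
    simp only [hg, Prod.mk.injEq] at hxy
    obtain ⟨e1, e2⟩ := euclid hxi hyi hxy.1
    obtain ⟨e3, e4⟩ := euclid hxj hyj hxy.2
    have : x.1.1 = y.1.1 := by omega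
    have : x.1.2 = y.1.2 := by omega
    exact Prod.ext (Prod.ext ‹x.1.1 = y.1.1› ‹x.1.2 = y.1.2›) (Prod.ext e2 e4)
  have hcard : ((U' ×ˢ (Finset.range s ×ˢ Finset.range s)).image g).card = U'.card * (s*s) := by
    rw [Finset.card_image_of_injOn hinj, Finset.card_product, Finset.card_product,
      Finset.card_range]
  rw [← hcard]
  apply key_count hs
  intro p hp
  rw [Finset.mem_image] at hp
  obtain ⟨x, hx, hpx⟩ := hp
  obtain ⟨⟨a, b⟩, i, j⟩ := x
  obtain ⟨⟨ha1, ha3, hb1, hb3⟩, hxU, hi, hj⟩ := hmem _ hx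
  obtain ⟨r, c, hocc, h1, h2, h3, h4⟩ := hU _ hxU
  dsimp only at ha1 ha3 hb1 hb3 hi hj h1 h2 h3 h4
  have ea : (a-1)*s + s = a*s := subone_mul ha1
  have eb : (b-1)*s + s = b*s := subone_mul hb1
  have ea2 : (a+3)*s ≤ L*s := Nat.mul_le_mul_right s ha3
  have eb2 : (b+3)*s ≤ L*s := Nat.mul_le_mul_right s hb3
  have ea3 : (a+3)*s = a*s + 3*s := by ring
  have eb3 : (b+3)*s = b*s + 3*s := by ring
  subst hpx
  refine ⟨by simp only [hg]; omega, by simp only [hg]; omega,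
    r, c, hocc, by simp only [hg]; omega, by simp only [hg]; omega,
    by simp only [hg]; omega, by simp only [hg]; omega⟩

lemma edge_h {A : Type*} {n : ℕ} {M : ℕ → ℕ → A} {s L : ℕ} (hs : 1 ≤ s)
    (hLs : L * s = n) (U : Finset (ℕ × ℕ)) (hU : ∀ u ∈ U, SBocc n M s u)
    (a t : ℕ) (ht1 : t ≤ a*s) (ht2 : a*s + 2*s ≤ t + 3*s) (ht3 : t + 3*s ≤ n) :
    (U.filter (fun u => u.1 = a ∧ 1 ≤ u.2 ∧ u.2 + 3 ≤ L)).card * s ≤ dkk n M (3*s) := by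
  classical
  set V := U.filter (fun u => u.1 = a ∧ 1 ≤ u.2 ∧ u.2 + 3 ≤ L) with hV
  set g : (ℕ×ℕ) × ℕ → ℕ × ℕ := fun x => (t, (x.1.2 - 1)*s + x.2) with hg
  have hmem : ∀ x ∈ V ×ˢ Finset.range s,
      (x.1.1 = a ∧ 1 ≤ x.1.2 ∧ x.1.2 + 3 ≤ L) ∧ x.1 ∈ U ∧ x.2 < s := by
    intro x hx
    rw [Finset.mem_product, hV, Finset.mem_filter, Finset.mem_range] at hx
    exact ⟨hx.1.2, hx.1.1, hx.2⟩
  have hinj : Set.InjOn g ↑(V ×ˢ Finset.range s) := by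
    intro x hx y hy hxy
    obtain ⟨⟨hxa, hx2, -⟩, -, hxi⟩ := hmem x hx
    obtain ⟨⟨hya, hy2, -⟩, -, hyi⟩ := hmem y hy
    simp only [hg, Prod.mk.injEq] at hxy
    obtain ⟨e1, e2⟩ := euclid hxi hyi hxy.2
    have : x.1.2 = y.1.2 := by omega
    exact Prod.ext (Prod.ext (hxa.trans hya.symm) this) e2
  have hcard : ((V ×ˢ Finset.range s).image g).card = V.card * s := by
    rw [Finset.card_image_of_injOn hinj, Finset.card_product, Finset.card_range]
  rw [← hcard]
  apply key_count hs
  intro p hp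
  rw [Finset.mem_image] at hp
  obtain ⟨x, hx, hpx⟩ := hp
  obtain ⟨⟨a', b⟩, j⟩ := x
  obtain ⟨⟨hxa, hb1, hb3⟩, hxU, hj⟩ := hmem _ hx
  obtain ⟨r, c, hocc, h1, h2, h3, h4⟩ := hU _ hxU
  dsimp only at hxa hb1 hb3 hj h1 h2 h3 h4
  rw [hxa] at h1 h2
  have eb : (b-1)*s + s = b*s := subone_mul hb1
  have eb2 : (b+3)*s ≤ L*s := Nat.mul_le_mul_right s hb3
  have eb3 : (b+3)*s = b*s + 3*s := by ring
  subst hpx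
  refine ⟨by simp only [hg]; omega, by simp only [hg]; omega,
    r, c, hocc, by simp only [hg]; omega, by simp only [hg]; omega,
    by simp only [hg]; omega, by simp only [hg]; omega⟩

lemma edge_v {A : Type*} {n : ℕ} {M : ℕ → ℕ → A} {s L : ℕ} (hs : 1 ≤ s)
    (hLs : L * s = n) (U : Finset (ℕ × ℕ)) (hU : ∀ u ∈ U, SBocc n M s u)
    (b t : ℕ) (ht1 : t ≤ b*s) (ht2 : b*s + 2*s ≤ t + 3*s) (ht3 : t + 3*s ≤ n) :
    (U.filter (fun u => u.2 = b ∧ 1 ≤ u.1 ∧ u.1 + 3 ≤ L)).card * s ≤ dkk n M (3*s) := by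
  classical
  set V := U.filter (fun u => u.2 = b ∧ 1 ≤ u.1 ∧ u.1 + 3 ≤ L) with hV
  set g : (ℕ×ℕ) × ℕ → ℕ × ℕ := fun x => ((x.1.1 - 1)*s + x.2, t) with hg
  have hmem : ∀ x ∈ V ×ˢ Finset.range s,
      (x.1.2 = b ∧ 1 ≤ x.1.1 ∧ x.1.1 + 3 ≤ L) ∧ x.1 ∈ U ∧ x.2 < s := by
    intro x hx
    rw [Finset.mem_product, hV, Finset.mem_filter, Finset.mem_range] at hx
    exact ⟨hx.1.2, hx.1.1, hx.2⟩
  have hinj : Set.InjOn g ↑(V ×ˢ Finset.range s) := by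
    intro x hx y hy hxy
    obtain ⟨⟨hxa, hx2, -⟩, -, hxi⟩ := hmem x hx
    obtain ⟨⟨hya, hy2, -⟩, -, hyi⟩ := hmem y hy
    simp only [hg, Prod.mk.injEq] at hxy
    obtain ⟨e1, e2⟩ := euclid hxi hyi hxy.1
    have : x.1.1 = y.1.1 := by omega
    exact Prod.ext (Prod.ext this (hxa.trans hya.symm)) e2
  have hcard : ((V ×ˢ Finset.range s).image g).card = V.card * s := by
    rw [Finset.card_image_of_injOn hinj, Finset.card_product, Finset.card_range]
  rw [← hcard]
  apply key_count hs
  intro p hp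
  rw [Finset.mem_image] at hp
  obtain ⟨x, hx, hpx⟩ := hp
  obtain ⟨⟨b', a'⟩, j⟩ := x
  obtain ⟨⟨hxa, hb1, hb3⟩, hxU, hj⟩ := hmem _ hx
  obtain ⟨r, c, hocc, h1, h2, h3, h4⟩ := hU _ hxU
  dsimp only at hxa hb1 hb3 hj h1 h2 h3 h4
  rw [hxa] at h3 h4
  have eb : (b'-1)*s + s = b'*s := subone_mul hb1
  have eb2 : (b'+3)*s ≤ L*s := Nat.mul_le_mul_right s hb3
  have eb3 : (b'+3)*s = b'*s + 3*s := by ring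
  subst hpx
  refine ⟨by simp only [hg]; omega, by simp only [hg]; omega,
    r, c, hocc, by simp only [hg]; omega, by simp only [hg]; omega,
    by simp only [hg]; omega, by simp only [hg]; omega⟩
lemma line_h {L : ℕ} (hL : 5 ≤ L) (U : Finset (ℕ×ℕ)) [DecidableEq (ℕ×ℕ)]
    (hUr : U ⊆ Finset.range (L-1) ×ˢ Finset.range (L-1)) (a : ℕ)
    [DecidablePred (fun u : ℕ×ℕ => u.1 = a)]
    [DecidablePred (fun u : ℕ×ℕ => u.1 = a ∧ 1 ≤ u.2 ∧ u.2 + 3 ≤ L)] :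
    (U.filter (fun u => u.1 = a)).card ≤
      (U.filter (fun u => u.1 = a ∧ 1 ≤ u.2 ∧ u.2 + 3 ≤ L)).card + 2 ∧
    (U.filter (fun u => u.1 = a)).card ≤ L - 1 := by
  constructor
  · have hsub : U.filter (fun u => u.1 = a) ⊆
        (U.filter (fun u => u.1 = a ∧ 1 ≤ u.2 ∧ u.2 + 3 ≤ L)) ∪ {(a,0), (a,L-2)} := by
      intro u hu
      rw [Finset.mem_filter] at hu
      have hb : u.2 < L - 1 := by
        have := hUr hu.1
        rw [Finset.mem_product, Finset.mem_range, Finset.mem_range] at this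
        exact this.2
      rcases Classical.em (1 ≤ u.2 ∧ u.2 + 3 ≤ L) with h | h
      · exact Finset.mem_union_left _ (Finset.mem_filter.2 ⟨hu.1, hu.2, h⟩)
      · have : u.2 = 0 ∨ u.2 = L - 2 := by omega
        apply Finset.mem_union_right
        rcases this with h' | h'
        · exact Finset.mem_insert.2 (Or.inl (by
            have : u = (u.1, u.2) := rfl
            rw [this, hu.2, h']))
        · refine Finset.mem_insert.2 (Or.inr (Finset.mem_singleton.2 (by
            have : u = (u.1, u.2) := rfl
            rw [this, hu.2, h'])))
    refine le_trans (Finset.card_le_card hsub) (le_trans (Finset.card_union_le _ _) ?_)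
    have h2 : ({(a,0), (a,L-2)} : Finset (ℕ×ℕ)).card ≤ 2 :=
      le_trans (Finset.card_insert_le _ _) (by simp)
    omega
  · have hsub : U.filter (fun u => u.1 = a) ⊆ {a} ×ˢ Finset.range (L-1) := by
      intro u hu
      rw [Finset.mem_filter] at hu
      have := hUr hu.1
      rw [Finset.mem_product, Finset.mem_range, Finset.mem_range] at this
      rw [Finset.mem_product, Finset.mem_singleton, Finset.mem_range]
      exact ⟨hu.2, this.2⟩
    refine le_trans (Finset.card_le_card hsub) ?_
    rw [Finset.card_product, Finset.card_singleton, Finset.card_range, one_mul]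

lemma line_v {L : ℕ} (hL : 5 ≤ L) (U : Finset (ℕ×ℕ)) [DecidableEq (ℕ×ℕ)]
    (hUr : U ⊆ Finset.range (L-1) ×ˢ Finset.range (L-1)) (a : ℕ)
    [DecidablePred (fun u : ℕ×ℕ => u.2 = a)]
    [DecidablePred (fun u : ℕ×ℕ => u.2 = a ∧ 1 ≤ u.1 ∧ u.1 + 3 ≤ L)] :
    (U.filter (fun u => u.2 = a)).card ≤
      (U.filter (fun u => u.2 = a ∧ 1 ≤ u.1 ∧ u.1 + 3 ≤ L)).card + 2 ∧
    (U.filter (fun u => u.2 = a)).card ≤ L - 1 := by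
  constructor
  · have hsub : U.filter (fun u => u.2 = a) ⊆
        (U.filter (fun u => u.2 = a ∧ 1 ≤ u.1 ∧ u.1 + 3 ≤ L)) ∪ {(0,a), (L-2,a)} := by
      intro u hu
      rw [Finset.mem_filter] at hu
      have hb : u.1 < L - 1 := by
        have := hUr hu.1
        rw [Finset.mem_product, Finset.mem_range, Finset.mem_range] at this
        exact this.1
      rcases Classical.em (1 ≤ u.1 ∧ u.1 + 3 ≤ L) with h | h
      · exact Finset.mem_union_left _ (Finset.mem_filter.2 ⟨hu.1, hu.2, h⟩)
      · have : u.1 = 0 ∨ u.1 = L - 2 := by omega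
        apply Finset.mem_union_right
        rcases this with h' | h'
        · exact Finset.mem_insert.2 (Or.inl (by
            have : u = (u.1, u.2) := rfl
            rw [this, hu.2, h']))
        · refine Finset.mem_insert.2 (Or.inr (Finset.mem_singleton.2 (by
            have : u = (u.1, u.2) := rfl
            rw [this, hu.2, h'])))
    refine le_trans (Finset.card_le_card hsub) (le_trans (Finset.card_union_le _ _) ?_)
    have h2 : ({(0,a), (L-2,a)} : Finset (ℕ×ℕ)).card ≤ 2 :=
      le_trans (Finset.card_insert_le _ _) (by simp)
    omega
  · have hsub : U.filter (fun u => u.2 = a) ⊆ Finset.range (L-1) ×ˢ {a} := by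
      intro u hu
      rw [Finset.mem_filter] at hu
      have := hUr hu.1
      rw [Finset.mem_product, Finset.mem_range, Finset.mem_range] at this
      rw [Finset.mem_product, Finset.mem_singleton, Finset.mem_range]
      exact ⟨this.1, hu.2⟩
    refine le_trans (Finset.card_le_card hsub) ?_
    rw [Finset.card_product, Finset.card_singleton, Finset.card_range, mul_one]

lemma min_le_three_sqrt {x y nd : ℝ} (hx : 0 ≤ x) (hy : 0 ≤ y) (hnd : 0 ≤ nd)
    (hxy : x * y ≤ 9 * nd) : min x y ≤ 3 * Real.sqrt nd := by
  have h0 : 0 ≤ min x y := le_min hx hy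
  have h1 : min x y * min x y ≤ x * y :=
    mul_le_mul (min_le_left _ _) (min_le_right _ _) h0 hx
  have h2 : min x y ≤ Real.sqrt (9 * nd) := by
    rw [Real.le_sqrt h0 (by positivity)]
    calc min x y ^ 2 = min x y * min x y := sq (min x y) ▸ by ring
      _ ≤ x * y := h1
      _ ≤ 9 * nd := hxy
  calc min x y ≤ Real.sqrt (9 * nd) := h2
    _ = 3 * Real.sqrt nd := by
        rw [Real.sqrt_mul (by norm_num : (0:ℝ) ≤ 9)]
        congr 1
        rw [show (9:ℝ) = 3^2 by norm_num, Real.sqrt_sq (by norm_num)]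
lemma cast_div_sq {UI D s : ℕ} {d : ℝ} (h : UI * (s*s) ≤ D) (hD : (D:ℝ) ≤ 9*(s:ℝ)^2*d)
    (hs : 1 ≤ s) : (UI:ℝ) ≤ 9*d := by
  have hs2 : (0:ℝ) < (s:ℝ)*(s:ℝ) := by
    have : (1:ℝ) ≤ (s:ℝ) := by exact_mod_cast hs
    nlinarith
  have h' : (UI:ℝ) * ((s:ℝ)*(s:ℝ)) ≤ (D:ℝ) := by exact_mod_cast h
  have e : 9*(s:ℝ)^2*d = (9*d) * ((s:ℝ)*(s:ℝ)) := by ring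
  have h'' : (UI:ℝ) * ((s:ℝ)*(s:ℝ)) ≤ (9*d) * ((s:ℝ)*(s:ℝ)) := by linarith
  exact le_of_mul_le_mul_right h'' hs2

lemma cast_div_lin {F D s : ℕ} {d : ℝ} (h : F * s ≤ D) (hD : (D:ℝ) ≤ 9*(s:ℝ)^2*d)
    (hs : 1 ≤ s) : (F:ℝ) ≤ 9*(s:ℝ)*d := by
  have hspos : (0:ℝ) < (s:ℝ) := by
    have : (1:ℝ) ≤ (s:ℝ) := by exact_mod_cast hs
    linarith
  have h' : (F:ℝ) * (s:ℝ) ≤ (D:ℝ) := by exact_mod_cast h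
  have e : 9*(s:ℝ)^2*d = (9*(s:ℝ)*d) * (s:ℝ) := by ring
  have h'' : (F:ℝ) * (s:ℝ) ≤ (9*(s:ℝ)*d) * (s:ℝ) := by linarith
  exact le_of_mul_le_mul_right h'' hspos

lemma line_min {E F L s : ℕ} {d : ℝ} (h1 : E ≤ F + 2) (h2 : E ≤ L - 1)
    (h3 : (F:ℝ) ≤ 9*(s:ℝ)*d) : (E:ℝ) ≤ min (L:ℝ) (9*(s:ℝ)*d) + 2 := by
  rcases le_total (L:ℝ) (9*(s:ℝ)*d) with h | h
  · rw [min_eq_left h]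
    have h4 : E ≤ L := by omega
    have h5 : (E:ℝ) ≤ (L:ℝ) := by exact_mod_cast h4
    linarith
  · rw [min_eq_right h]
    have h5 : (E:ℝ) ≤ (F:ℝ) + 2 := by exact_mod_cast h1
    linarith

lemma dkk_cast_real {A : Type*} (n : ℕ) (M : ℕ → ℕ → A) (m : ℕ) (h1 : 1 ≤ m) (h2 : m ≤ n) :
    ((dkk n M m : ℕ) : ℝ) ≤ (m:ℝ)^2 * ((delta2D n M : ℚ≥0) : ℝ) := by
  have h' := dkk_le_delta n M m h1 h2
  have h2' := (NNRat.cast_le (K := ℝ)).2 h'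
  push_cast at h2'
  exact h2'

/-- At any level of the 2D block tree (block size `k^ℓ × k^ℓ`, `n` a power of
`k`), the number of marked blocks is `O(δ₂D(M) + √(n·δ₂D(M)))`. -/
theorem stmt19 :
    ∃ Cst : ℝ, 0 < Cst ∧ ∀ {A : Type} (n k α ℓ : ℕ) (M : ℕ → ℕ → A),
      2 ≤ k → ℓ ≤ α → n = k ^ α →
      ((MarkedBlocks n M (k ^ ℓ)).ncard : ℝ) ≤
        Cst * ((delta2D n M : ℝ) + Real.sqrt ((n : ℝ) * (delta2D n M : ℝ))) := by
  classical
  refine ⟨100, by norm_num, ?_⟩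
  intro A n k α ℓ M hk hℓ hn
  set s := k ^ ℓ with hsdef
  have hs : 1 ≤ s := Nat.one_le_pow _ _ (by omega)
  have hdvd : s ∣ n := by rw [hn, hsdef]; exact pow_dvd_pow k hℓ
  set L := n / s with hLdef
  have hLs : L * s = n := Nat.div_mul_cancel hdvd
  have hn1 : 1 ≤ n := by rw [hn]; exact Nat.one_le_pow _ _ (by omega)
  have hd1 : (1:ℚ≥0) ≤ delta2D n M := one_le_delta n M hn1
  have hd1R : (1:ℝ) ≤ (delta2D n M : ℝ) := by exact_mod_cast hd1
  set d : ℝ := (delta2D n M : ℝ) with hdd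
  have hsq : 0 ≤ Real.sqrt ((n:ℝ) * d) := Real.sqrt_nonneg _
  have hqlt : ∀ q ∈ MarkedBlocks n M s, q.1 < L ∧ q.2 < L := by
    rintro q ⟨h1, h2, -⟩
    have e1 : (q.1+1)*s = q.1*s + s := by ring
    have e2 : (q.2+1)*s = q.2*s + s := by ring
    have m1 : (q.1+1)*s ≤ L*s := by omega
    have m2 : (q.2+1)*s ≤ L*s := by omega
    have c1 := Nat.le_of_mul_le_mul_right m1 (by omega)
    have c2 := Nat.le_of_mul_le_mul_right m2 (by omega)
    omega
  set Mk : Finset (ℕ×ℕ) := (Finset.range L ×ˢ Finset.range L).filter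
    (fun q => q ∈ MarkedBlocks n M s) with hMk
  have hMkeq : MarkedBlocks n M s = ↑Mk := by
    ext q
    simp only [hMk, Finset.coe_filter, Finset.mem_product, Finset.mem_range,
      Set.mem_setOf_eq]
    exact ⟨fun h => ⟨⟨(hqlt q h).1, (hqlt q h).2⟩, h⟩, fun h => h.2⟩
  rw [hMkeq, Set.ncard_coe_finset]
  rcases le_or_gt L 4 with hL4 | hL4
  · have hsub : Mk ⊆ Finset.range L ×ˢ Finset.range L := Finset.filter_subset _ _
    have h16 : Mk.card ≤ 16 := by
      have hc := Finset.card_le_card hsub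
      rw [Finset.card_product, Finset.card_range] at hc
      have : L * L ≤ 4 * 4 := Nat.mul_le_mul hL4 hL4
      omega
    calc (Mk.card : ℝ) ≤ 16 := by exact_mod_cast h16
      _ ≤ 100 * (d + Real.sqrt ((n:ℝ) * d)) := by linarith
  · have hL5 : 5 ≤ L := hL4
    set U : Finset (ℕ×ℕ) := (Finset.range (L-1) ×ˢ Finset.range (L-1)).filter
      (fun u => SBocc n M s u) with hUdef
    have hUr : U ⊆ Finset.range (L-1) ×ˢ Finset.range (L-1) := Finset.filter_subset _ _
    have hU : ∀ u ∈ U, SBocc n M s u := fun u hu => (Finset.mem_filter.1 hu).2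
    set sb : ℕ → ℕ := fun r => min (r / s) (L - 2) with hsb
    have sbp : ∀ r, r + s ≤ n → sb r * s ≤ r ∧ r + s ≤ sb r * s + 2*s ∧ sb r ≤ L - 2 := by
      intro r hr
      have hds : r / s * s ≤ r := Nat.div_mul_le_self r s
      have hds2 : r < r / s * s + s := Nat.lt_div_mul_add (by omega)
      rcases le_or_gt (r / s) (L-2) with h | h
      · have e : sb r = r / s := min_eq_left h
        rw [e]; exact ⟨hds, by omega, h⟩
      · have e : sb r = L - 2 := min_eq_right h.le
        rw [e]
        have h1 : (L-2) * s ≤ r / s * s := Nat.mul_le_mul_right s (by omega)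
        have h2 : (L-2) * s + 2 * s = L * s := by
          have e2 : L - 2 + 2 = L := by omega
          calc (L-2)*s + 2*s = ((L-2)+2)*s := by ring
            _ = L*s := by rw [e2]
        exact ⟨by omega, by omega, le_rfl⟩
    set A1 := U.image (fun u => (u.1, u.2)) with hA1
    set A2 := U.image (fun u => (u.1+1, u.2)) with hA2
    set A3 := U.image (fun u => (u.1, u.2+1)) with hA3
    set A4 := U.image (fun u => (u.1+1, u.2+1)) with hA4
    have hcover : Mk ⊆ A1 ∪ A2 ∪ A3 ∪ A4 := by
      intro q hq
      have hqM : q ∈ MarkedBlocks n M s := (Finset.mem_filter.1 hq).2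
      obtain ⟨hq1, hq2, r, c, hocc, i1, i2, i3, i4⟩ := hqM
      obtain ⟨a1, a2, a3⟩ := sbp r hocc.1
      obtain ⟨b1, b2, b3⟩ := sbp c hocc.2.1
      have hUmem : (sb r, sb c) ∈ U := by
        rw [hUdef, Finset.mem_filter, Finset.mem_product, Finset.mem_range, Finset.mem_range]
        exact ⟨⟨by omega, by omega⟩, r, c, hocc, a1, a2, b1, b2⟩
      have e1 : (q.1+1)*s = q.1*s + s := by ring
      have e2 : (sb r + 2)*s = sb r*s + 2*s := by ring
      have e3 : (q.2+1)*s = q.2*s + s := by ring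
      have e4 : (sb c + 2)*s = sb c*s + 2*s := by ring
      have m1 : sb r * s < (q.1+1)*s := by omega
      have m2 : q.1 * s < (sb r + 2)*s := by omega
      have m3 : sb c * s < (q.2+1)*s := by omega
      have m4 : q.2 * s < (sb c + 2)*s := by omega
      have c1 : sb r ≤ q.1 := by
        have := lt_of_mul_lt_mul_right m1 (Nat.zero_le s); omega
      have c2 : q.1 < sb r + 2 := lt_of_mul_lt_mul_right m2 (Nat.zero_le s)
      have c3 : sb c ≤ q.2 := by
        have := lt_of_mul_lt_mul_right m3 (Nat.zero_le s); omega
      have c4 : q.2 < sb c + 2 := lt_of_mul_lt_mul_right m4 (Nat.zero_le s)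
      simp only [Finset.mem_union, hA1, hA2, hA3, hA4, Finset.mem_image]
      rcases Nat.lt_or_ge q.1 (sb r + 1) with d1 | d1
      · rcases Nat.lt_or_ge q.2 (sb c + 1) with d2 | d2
        · exact Or.inl (Or.inl (Or.inl ⟨(sb r, sb c), hUmem,
            Prod.ext_iff.2 ⟨by omega, by omega⟩⟩))
        · exact Or.inl (Or.inr ⟨(sb r, sb c), hUmem,
            Prod.ext_iff.2 ⟨by omega, by omega⟩⟩)
      · rcases Nat.lt_or_ge q.2 (sb c + 1) with d2 | d2
        · exact Or.inl (Or.inl (Or.inr ⟨(sb r, sb c), hUmem,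
            Prod.ext_iff.2 ⟨by omega, by omega⟩⟩))
        · exact Or.inr ⟨(sb r, sb c), hUmem, Prod.ext_iff.2 ⟨by omega, by omega⟩⟩
    have hc1 : Mk.card ≤ 4 * U.card := by
      have h0 := Finset.card_le_card hcover
      have u1 := Finset.card_union_le (A1 ∪ A2 ∪ A3) A4
      have u2 := Finset.card_union_le (A1 ∪ A2) A3
      have u3 := Finset.card_union_le A1 A2
      have i1 : A1.card ≤ U.card := Finset.card_image_le
      have i2 : A2.card ≤ U.card := Finset.card_image_le
      have i3 : A3.card ≤ U.card := Finset.card_image_le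
      have i4 : A4.card ≤ U.card := Finset.card_image_le
      omega
    set UI := U.filter (fun u => 1 ≤ u.1 ∧ u.1 + 3 ≤ L ∧ 1 ≤ u.2 ∧ u.2 + 3 ≤ L) with hUI
    set E1 := U.filter (fun u => u.1 = 0) with hE1
    set E2 := U.filter (fun u => u.1 = L-2) with hE2
    set E3 := U.filter (fun u => u.2 = 0) with hE3
    set E4 := U.filter (fun u => u.2 = L-2) with hE4
    have hdecomp : U ⊆ UI ∪ E1 ∪ E2 ∪ E3 ∪ E4 := by
      intro u hu
      have hb : u.1 < L-1 ∧ u.2 < L-1 := by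
        have := hUr hu
        rw [Finset.mem_product, Finset.mem_range, Finset.mem_range] at this
        exact this
      have hnum : (1 ≤ u.1 ∧ u.1 + 3 ≤ L ∧ 1 ≤ u.2 ∧ u.2 + 3 ≤ L) ∨ u.1 = 0 ∨
          u.1 = L-2 ∨ u.2 = 0 ∨ u.2 = L-2 := by omega
      simp only [Finset.mem_union, hUI, hE1, hE2, hE3, hE4, Finset.mem_filter]
      tauto
    have hc2 : U.card ≤ UI.card + E1.card + E2.card + E3.card + E4.card := by
      have h0 := Finset.card_le_card hdecomp
      have u1 := Finset.card_union_le (UI ∪ E1 ∪ E2 ∪ E3) E4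
      have u2 := Finset.card_union_le (UI ∪ E1 ∪ E2) E3
      have u3 := Finset.card_union_le (UI ∪ E1) E2
      have u4 := Finset.card_union_le UI E1
      omega
    set D := dkk n M (3*s) with hD
    have h3s : 3*s ≤ n := by
      have := Nat.mul_le_mul_right s (show 3 ≤ L by omega)
      omega
    have e5 : (L-2)*s + 2*s = L*s := by
      have e : L - 2 + 2 = L := by omega
      calc (L-2)*s + 2*s = ((L-2)+2)*s := by ring
        _ = L*s := by rw [e]
    have e6 : (L-3)*s + 3*s = L*s := by
      have e : L - 3 + 3 = L := by omega
      calc (L-3)*s + 3*s = ((L-3)+3)*s := by ring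
        _ = L*s := by rw [e]
    have hIB : UI.card * (s*s) ≤ D := interior_bound hs hLs U hU
    have hF1 := edge_h hs hLs U hU 0 0 (Nat.zero_le _) (by omega) (by omega)
    have hF2 := edge_h hs hLs U hU (L-2) ((L-3)*s)
      (Nat.mul_le_mul_right s (by omega)) (by omega) (by omega)
    have hG1 := edge_v hs hLs U hU 0 0 (Nat.zero_le _) (by omega) (by omega)
    have hG2 := edge_v hs hLs U hU (L-2) ((L-3)*s)
      (Nat.mul_le_mul_right s (by omega)) (by omega) (by omega)
    have l1 := line_h hL5 U hUr 0
    have l2 := line_h hL5 U hUr (L-2)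
    have l3 := line_v hL5 U hUr 0
    have l4 := line_v hL5 U hUr (L-2)
    -- pass to the reals
    have hd0 : (0:ℝ) ≤ d := by linarith
    have hsR : (1:ℝ) ≤ (s:ℝ) := by exact_mod_cast hs
    have hnLs : (L:ℝ) * (s:ℝ) = (n:ℝ) := by exact_mod_cast hLs
    have hDd : (D:ℝ) ≤ 9*(s:ℝ)^2*d := by
      have h'' := dkk_cast_real n M (3*s) (by omega) h3s
      rw [← hdd] at h''
      calc (D:ℝ) = ((dkk n M (3*s) : ℕ):ℝ) := by rw [hD]
        _ ≤ ((3*s:ℕ):ℝ)^2 * d := h''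
        _ = 9*(s:ℝ)^2*d := by push_cast; ring
    have hUIR : (UI.card : ℝ) ≤ 9*d := cast_div_sq hIB hDd hs
    have hF1R := cast_div_lin hF1 hDd hs
    have hF2R := cast_div_lin hF2 hDd hs
    have hG1R := cast_div_lin hG1 hDd hs
    have hG2R := cast_div_lin hG2 hDd hs
    have hE1R := line_min l1.1 l1.2 hF1R
    have hE2R := line_min l2.1 l2.2 hF2R
    have hE3R := line_min l3.1 l3.2 hG1R
    have hE4R := line_min l4.1 l4.2 hG2R
    have hmin : min (L:ℝ) (9*(s:ℝ)*d) ≤ 3 * Real.sqrt ((n:ℝ)*d) := by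
      apply min_le_three_sqrt (by positivity) (by positivity) (by positivity)
      have e : (L:ℝ) * (9*(s:ℝ)*d) = 9 * ((n:ℝ)*d) := by rw [← hnLs]; ring
      exact le_of_eq e
    have hMkR : (Mk.card:ℝ) ≤ 4*((UI.card:ℝ) + E1.card + E2.card + E3.card + E4.card) := by
      have h : Mk.card ≤ 4*(UI.card + E1.card + E2.card + E3.card + E4.card) := by omega
      exact_mod_cast h
    linarith
end
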